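/- arXiv:2402.17503 — 7 statements merged into one kernel-verified Lean document; each statement's English description precedes it below -/
import Mathlib

section
/- Let X = Σ_{m=1}^{M} a_m ψ_{i_m} ψ_{j_m}* with i_m ≥ 0, j_m < 0 for all m. Then in the Clifford algebra, (ad X)(Λ_k) = Σ_{m=1}^{M} a_m (ψ_{i_m} ψ_{j_m+k}* − ψ_{i_m−k} ψ_{j_m}*), (ad X)^2(Λ_k) = −2 Σ_{m,n=1}^{M} δ_{i_m, j_n+k} a_m a_n ψ_{i_n} ψ_{j_m}*, and (ad X)^n(Λ_k) = 0 for all n ≥ 3. -/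
/-!
Write `Q a b = ψ a * ψs b`. The canonical anticommutation relations give
`⁅Q a b, Q c d⁆ = δ_{bc} Q a d - δ_{ad} Q c b`. Since every creation index `i m ≥ 0` differs
from every annihilation index `j n < 0`, the elements `Q (i n) (j m)` commute with `X`.
Bracketing with `Λ k` shifts one of the two indices of each summand of `X`, so bracketing once
more with `X` leaves a single Kronecker delta per pair of summands: `(ad X)² (Λ k)` lies in the
span of the `Q (i n) (j m)`, which `ad X` kills.
-/

open Finset

attribute [local instance] LieRing.ofAssociativeRing LieAlgebra.ofAssociativeAlgebra

theorem lie_mul_mul_of_anticomm {R : Type*} [Ring R] {x y z w : R}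
    (hxz : x * z + z * x = 0) (hyw : y * w + w * y = 0) :
    ⁅x * y, z * w⁆ = x * (z * y + y * z) * w - z * (x * w + w * x) * y := by
  have hzx : z * x = -(x * z) := eq_neg_of_add_eq_zero_right hxz
  have hwy : w * y = -(y * w) := eq_neg_of_add_eq_zero_right hyw
  rw [Ring.lie_def, ← sub_eq_zero]
  calc x * y * (z * w) - z * w * (x * y) - (x * (z * y + y * z) * w - z * (x * w + w * x) * y)
      = z * x * (w * y) - x * z * (y * w) := by noncomm_ring
    _ = 0 := by rw [hzx, hwy, neg_mul_neg, sub_self]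

theorem lie_sum_quadratic_eq_of_lie_quadratic {R : Type*} [Ring R] [Algebra ℚ R]
    {ψ ψs : ℤ → R} {M : ℕ} (a : Fin M → ℚ) (i j : Fin M → ℤ) {k : ℤ} {L : R}
    (hL : ∀ c d : ℤ, ⁅ψ c * ψs d, L⁆ = ψ c * ψs (d + k) - ψ (c - k) * ψs d) :
    ⁅∑ m, a m • (ψ (i m) * ψs (j m)), L⁆
      = ∑ m, a m • (ψ (i m) * ψs (j m + k) - ψ (i m - k) * ψs (j m)) := by
  simp only [sum_lie, smul_lie, hL]

structure IsCAR {R : Type*} [Ring R] (ψ ψs : ℤ → R) : Prop where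
  anticomm_ψ_ψs : ∀ i j : ℤ, ψ i * ψs j + ψs j * ψ i = if i = j then 1 else 0
  anticomm_ψ_ψ : ∀ i j : ℤ, ψ i * ψ j + ψ j * ψ i = 0
  anticomm_ψs_ψs : ∀ i j : ℤ, ψs i * ψs j + ψs j * ψs i = 0

namespace IsCAR

variable {R : Type*} [Ring R] {ψ ψs : ℤ → R}

theorem lie_quadratic (h : IsCAR ψ ψs) (a b c d : ℤ) :
    ⁅ψ a * ψs b, ψ c * ψs d⁆
      = (if c = b then ψ a * ψs d else 0) - (if a = d then ψ c * ψs b else 0) := by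
  rw [lie_mul_mul_of_anticomm (h.anticomm_ψ_ψ a c) (h.anticomm_ψs_ψs b d),
    h.anticomm_ψ_ψs, h.anticomm_ψ_ψs]
  split_ifs <;> simp

variable [Algebra ℚ R] {M : ℕ} (a : Fin M → ℚ) (i j : Fin M → ℤ)

theorem lie_sum_quadratic_sum_quadratic_eq_zero (h : IsCAR ψ ψs) (hij : ∀ m n, i m ≠ j n)
    (c : Fin M → Fin M → ℚ) :
    ⁅∑ p, a p • (ψ (i p) * ψs (j p)), ∑ m, ∑ n, c m n • (ψ (i n) * ψs (j m))⁆ = 0 := by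
  simp [lie_sum, lie_smul, sum_lie, smul_lie, h.lie_quadratic, hij]

theorem lie_sum_quadratic_shift (h : IsCAR ψ ψs) (hij : ∀ m n, i m ≠ j n) (k : ℤ) :
    ⁅∑ n, a n • (ψ (i n) * ψs (j n)),
        ∑ m, a m • (ψ (i m) * ψs (j m + k) - ψ (i m - k) * ψs (j m))⁆
      = (-2 : ℚ) • ∑ m, ∑ n, (if i m = j n + k then a m * a n else 0) • (ψ (i n) * ψs (j m)) := by
  have term (m n : Fin M) :
      ⁅ψ (i n) * ψs (j n), ψ (i m) * ψs (j m + k) - ψ (i m - k) * ψs (j m)⁆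
        = -(if i n = j m + k then ψ (i m) * ψs (j n) else 0)
          - (if i m = j n + k then ψ (i n) * ψs (j m) else 0) := by
    simp [h.lie_quadratic, hij, sub_eq_iff_eq_add]
  -- the two double sums agree after swapping the summation indices
  calc _ = ∑ m, ∑ n, a m • a n • ⁅ψ (i n) * ψs (j n),
          ψ (i m) * ψs (j m + k) - ψ (i m - k) * ψs (j m)⁆ := by
        simp only [lie_sum, lie_smul, sum_lie, smul_lie, smul_sum]
    _ = -(∑ m, ∑ n, (if i n = j m + k then a n * a m else 0) • (ψ (i m) * ψs (j n))
          + ∑ m, ∑ n, (if i m = j n + k then a m * a n else 0) • (ψ (i n) * ψs (j m))) := by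
        simp only [term, ← sum_add_distrib, ← sum_neg_distrib]
        refine sum_congr rfl fun m _ => sum_congr rfl fun n _ => ?_
        split_ifs <;> module
    _ = _ := by rw [sum_comm]; module

end IsCAR

/-- For `X = Σ_{m=1}^{M} a_m ψ_{i_m} ψ*_{j_m}` with `i_m ≥ 0`, `j_m < 0`,
the adjoint action on `Λ_k = Σ_{n∈ℤ} ψ_n ψ*_{n+k}` (whose commutation with quadratic
elements, `[ψ_a ψ*_b, Λ_k] = ψ_a ψ*_{b+k} − ψ_{a−k} ψ*_b`, is recorded as a hypothesis)
satisfies `(ad X)(Λ_k) = Σ_m a_m (ψ_{i_m} ψ*_{j_m+k} − ψ_{i_m−k} ψ*_{j_m})`,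
`(ad X)²(Λ_k) = −2 Σ_{m,n} δ_{i_m, j_n+k} a_m a_n ψ_{i_n} ψ*_{j_m}`, and
`(ad X)^n(Λ_k) = 0` for all `n ≥ 3`. -/
theorem stmt3 {R : Type*} [Ring R] [Algebra ℚ R]
    (ψ ψs : ℤ → R)
    (h1 : ∀ i j : ℤ, ψ i * ψs j + ψs j * ψ i = if i = j then 1 else 0)
    (h2 : ∀ i j : ℤ, ψ i * ψ j + ψ j * ψ i = 0)
    (h3 : ∀ i j : ℤ, ψs i * ψs j + ψs j * ψs i = 0)
    (Λ : ℤ → R)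
    (hΛ : ∀ a b k : ℤ,
      (ψ a * ψs b) * Λ k - Λ k * (ψ a * ψs b) = ψ a * ψs (b + k) - ψ (a - k) * ψs b)
    (M : ℕ) (a : Fin M → ℚ) (i j : Fin M → ℤ)
    (hi : ∀ m, 0 ≤ i m) (hj : ∀ m, j m < 0)
    (X : R) (hX : X = ∑ m, a m • (ψ (i m) * ψs (j m))) (k : ℤ) :
    (X * Λ k - Λ k * X
        = ∑ m, a m • (ψ (i m) * ψs (j m + k) - ψ (i m - k) * ψs (j m)))
    ∧ ((fun Z => X * Z - Z * X)^[2] (Λ k)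
        = (-2 : ℚ) • ∑ m, ∑ p, (if i m = j p + k then a m * a p else 0) • (ψ (i p) * ψs (j m)))
    ∧ (∀ n : ℕ, 3 ≤ n → (fun Z => X * Z - Z * X)^[n] (Λ k) = 0) := by
  have hCAR : IsCAR ψ ψs := ⟨h1, h2, h3⟩
  have hij (m n : Fin M) : i m ≠ j n := ((hj n).trans_le (hi m)).ne'
  have ad_eq : (fun Z => X * Z - Z * X) = fun Z => ⁅X, Z⁆ := rfl
  rw [ad_eq]
  have first : ⁅X, Λ k⁆ = _ :=
    hX ▸ lie_sum_quadratic_eq_of_lie_quadratic a i j (fun c d => hΛ c d k)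
  have second : (fun Z => ⁅X, Z⁆)^[2] (Λ k)
      = (-2 : ℚ) • ∑ m, ∑ p, (if i m = j p + k then a m * a p else 0) • (ψ (i p) * ψs (j m)) := by
    rw [Function.iterate_succ_apply', Function.iterate_one, first, hX,
      hCAR.lie_sum_quadratic_shift a i j hij]
  have third : (fun Z => ⁅X, Z⁆)^[3] (Λ k) = 0 := by
    rw [Function.iterate_succ_apply', second, lie_smul, hX,
      hCAR.lie_sum_quadratic_sum_quadratic_eq_zero a i j hij, smul_zero]
  refine ⟨first, second, fun n hn => ?_⟩
  obtain ⟨n, rfl⟩ := Nat.exists_eq_add_of_le' hn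
  rw [Function.iterate_add_apply, third, Function.iterate_fixed (lie_zero _)]
end

section
/- Let X = Σ_{m=1}^{M} a_m ψ_{i_m} ψ_{j_m}* with i_m ≥ 0, j_m < 0, and g = e^X (a finite exponential since X is nilpotent in the adjoint action on Λ_k). Then g^{−1}(Λ_k + cΛ_{−1})g = Λ_k + cΛ_{−1} + Σ_m a_m(ψ_{i_m−k} ψ_{j_m}* − ψ_{i_m} ψ_{j_m+k}*) − Σ_{n,m} δ_{i_m, j_n+k} a_m a_n ψ_{i_n} ψ_{j_m}* + c Σ_m a_m(ψ_{i_m+1} ψ_{j_m}* − ψ_{i_m} ψ_{j_m−1}*). -/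
/-!
Write `Y = Λ_k + c Λ_{-1}`. The elements `ψ_p ψ*_q` with `p ≥ 0 > q` square to zero and pairwise
commute by the anticommutation relations, so `X`, a sum of `M` of them, has `X^{M+1} = 0`, and
`g`, `gi` are the exponentials `e^X`, `e^{-X}`. As left and right multiplication by `X` commute,
`e^{-X} Y e^X = exp (-ad X) Y`. The span of these elements is abelian and contains `X`,
`[Λ_{-1}, X]` and `[[Λ_k, X], X]`, so the series stops after `Y + [Y, X] + ½ [[Y, X], X]`, and
`[[Λ_k, X], X]` is computed from `[ψ_a ψ*_b, ψ_u ψ*_v] = δ_{ub} ψ_a ψ*_v - δ_{av} ψ_u ψ*_b`.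
-/

attribute [local instance 100] LieRing.ofAssociativeRing
open Finset LinearMap

namespace IsNilpotent
variable {A : Type*} [Ring A] [Algebra ℚ A]

theorem exp_mulLeft {x : A} (hx : IsNilpotent x) :
    exp (mulLeft ℚ x) = mulLeft ℚ (exp x) :=
  (map_exp hx (Algebra.lmul ℚ A)).symm

theorem exp_mulRight {x : A} (hx : IsNilpotent x) :
    exp (mulRight ℚ x) = mulRight ℚ (exp x) := by
  obtain ⟨k, hk⟩ := hx
  have hk' : mulRight ℚ x ^ k = 0 := by rw [pow_mulRight, hk, mulRight_zero_eq_zero]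
  ext y
  simp only [exp_eq_sum hk', pow_mulRight, LinearMap.coe_sum, LinearMap.coe_smul,
    Finset.sum_apply, Pi.smul_apply, mulRight_apply, exp_eq_sum hk, mul_sum, Algebra.mul_smul_comm]

theorem exp_neg_mul_mul_exp {x : A} (hx : IsNilpotent x) (y : A) :
    exp (-x) * y * exp x = exp (mulRight ℚ x - mulLeft ℚ x) y := by
  have hL : IsNilpotent (mulLeft ℚ (-x)) := (isNilpotent_mulLeft_iff ℚ _).2 hx.neg
  have hR : IsNilpotent (mulRight ℚ x) := (isNilpotent_mulRight_iff ℚ _).2 hx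
  have hneg : -mulLeft ℚ x = mulLeft ℚ (-x) := (map_neg (Algebra.lmul ℚ A) x).symm
  rw [sub_eq_add_neg, hneg, exp_add_of_commute (commute_mulLeft_right _ _).symm hR hL,
    exp_mulLeft hx.neg, exp_mulRight hx]
  rfl

theorem isNilpotent_mulRight_sub_mulLeft {x : A} (hx : IsNilpotent x) :
    IsNilpotent (mulRight ℚ x - mulLeft ℚ x) :=
  (commute_mulLeft_right x x).symm.isNilpotent_sub
    ((isNilpotent_mulRight_iff ℚ _).2 hx) ((isNilpotent_mulLeft_iff ℚ _).2 hx)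

theorem exp_neg_mul_mul_exp_of_lie_lie_lie_eq_zero {x y : A} (hx : IsNilpotent x)
    (h : ⁅⁅⁅y, x⁆, x⁆, x⁆ = 0) :
    exp (-x) * y * exp x = y + ⁅y, x⁆ + (2 : ℚ)⁻¹ • ⁅⁅y, x⁆, x⁆ := by
  set T := mulRight ℚ x - mulLeft ℚ x
  have hT : ∀ z, T z = ⁅z, x⁆ := fun z => by simp [T, Ring.lie_def]
  have h3 : (T ^ 3) • y = 0 := by
    simp only [Module.End.smul_def, pow_three, Module.End.mul_apply, hT, h]
  rw [exp_neg_mul_mul_exp hx, ← Module.End.smul_def,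
    exp_smul_eq_sum h3 (isNilpotent_mulRight_sub_mulLeft hx)]
  simp only [Module.End.smul_def, sum_range_succ, range_one, sum_singleton, Nat.factorial_zero,
    Nat.cast_one, inv_one, pow_zero, Module.End.one_apply, one_smul, Nat.factorial_one, pow_one, hT,
    Nat.factorial_two, Nat.cast_ofNat, sq, Module.End.mul_apply]

end IsNilpotent

theorem Finset.sum_pow_card_add_one_eq_zero {R ι : Type*} [Semiring R] (s : Finset ι) (f : ι → R)
    (hc : ∀ i ∈ s, ∀ j ∈ s, Commute (f i) (f j)) (hf : ∀ i ∈ s, f i ^ 2 = 0) :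
    (∑ i ∈ s, f i) ^ (#s + 1) = 0 := by
  classical
  induction s using Finset.induction_on with
  | empty => simp
  | @insert a s ha ih =>
    rw [sum_insert ha, card_insert_of_notMem ha]
    have hcomm : Commute (f a) (∑ i ∈ s, f i) :=
      Commute.sum_right _ _ _ fun j hj => hc a (mem_insert_self a s) j (mem_insert_of_mem hj)
    refine hcomm.add_pow_eq_zero_of_add_le_succ_of_pow_eq_zero (hf a (mem_insert_self a s))
      (ih (fun i hi j hj => hc i (mem_insert_of_mem hi) j (mem_insert_of_mem hj))
        (fun i hi => hf i (mem_insert_of_mem hi))) ?_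
    omega

structure IsCAR_s4 {ι A : Type*} [DecidableEq ι] [Ring A] (ψ ψs : ι → A) : Prop where
  psi_psiStar : ∀ i j, ψ i * ψs j + ψs j * ψ i = if i = j then 1 else 0
  psi_psi : ∀ i j, ψ i * ψ j + ψ j * ψ i = 0
  psiStar_psiStar : ∀ i j, ψs i * ψs j + ψs j * ψs i = 0

namespace IsCAR_s4
variable {ι A : Type*} [DecidableEq ι] [Ring A] {ψ ψs : ι → A}

theorem psiStar_mul_psi (h : IsCAR_s4 ψ ψs) (i j : ι) :
    ψs j * ψ i = (if i = j then 1 else 0) - ψ i * ψs j :=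
  eq_sub_of_add_eq' (h.psi_psiStar i j)

theorem lie_quad (h : IsCAR_s4 ψ ψs) (a b u v : ι) :
    ⁅ψ a * ψs b, ψ u * ψs v⁆
      = (if u = b then ψ a * ψs v else 0) - (if a = v then ψ u * ψs b else 0) := by
  have e3 : ψ u * ψ a = -(ψ a * ψ u) := eq_neg_of_add_eq_zero_left (h.psi_psi u a)
  have e4 : ψs v * ψs b = -(ψs b * ψs v) := eq_neg_of_add_eq_zero_left (h.psiStar_psiStar v b)
  calc ⁅ψ a * ψs b, ψ u * ψs v⁆
      = ψ a * (ψs b * ψ u) * ψs v - ψ u * (ψs v * ψ a) * ψs b := by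
        rw [Ring.lie_def]; noncomm_ring
    _ = (if u = b then ψ a * ψs v else 0) - (if a = v then ψ u * ψs b else 0)
          - ψ a * ψ u * (ψs b * ψs v) + ψ u * ψ a * (ψs v * ψs b) := by
        rw [h.psiStar_mul_psi, h.psiStar_mul_psi]; split_ifs <;> noncomm_ring
    _ = _ := by rw [e3, e4]; noncomm_ring

theorem lie_quad_eq_zero_of_ne (h : IsCAR_s4 ψ ψs) {a b u v : ι} (hub : u ≠ b) (hav : a ≠ v) :
    ⁅ψ a * ψs b, ψ u * ψs v⁆ = 0 := by
  rw [h.lie_quad, if_neg hub, if_neg hav, sub_zero]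

theorem quad_mul_self_of_ne [Module ℚ A] (h : IsCAR_s4 ψ ψs) {a b : ι} (hab : a ≠ b) :
    (ψ a * ψs b) * (ψ a * ψs b) = 0 := by
  have hsq : ψ a * ψ a = 0 := by
    have : (2 : ℚ) • (ψ a * ψ a) = 0 := by rw [two_smul]; exact h.psi_psi a a
    exact (smul_eq_zero.mp this).resolve_left two_ne_zero
  calc (ψ a * ψs b) * (ψ a * ψs b) = ψ a * (ψs b * ψ a) * ψs b := by noncomm_ring
    _ = -(ψ a * ψ a * (ψs b * ψs b)) := by
        rw [h.psiStar_mul_psi, if_neg hab]; noncomm_ring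
    _ = 0 := by rw [hsq, zero_mul, neg_zero]

end IsCAR_s4

section Fermions
variable {A : Type*} [Ring A] {ψ ψs : ℤ → A}

theorem IsCAR_s4.lie_shift_quad (h : IsCAR_s4 ψ ψs) {u v a b : ℤ} (hu : 0 ≤ u) (hv : v < 0)
    (ha : 0 ≤ a) (hb : b < 0) (k : ℤ) :
    ⁅ψ (u - k) * ψs v - ψ u * ψs (v + k), ψ a * ψs b⁆
      = -((if u = b + k then ψ a * ψs v else 0) + (if a = v + k then ψ u * ψs b else 0)) := by
  rw [sub_lie, h.lie_quad, h.lie_quad, if_neg (show a ≠ v by omega),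
    if_neg (show u ≠ b by omega)]
  simp only [sub_eq_iff_eq_add (a := u), zero_sub, sub_zero]
  abel

variable [Algebra ℚ A]

def nonnegNegSpan (ψ ψs : ℤ → A) : Submodule ℚ A :=
  Submodule.span ℚ {x | ∃ p q : ℤ, 0 ≤ p ∧ q < 0 ∧ ψ p * ψs q = x}

theorem quad_mem_nonnegNegSpan {p q : ℤ} (hp : 0 ≤ p) (hq : q < 0) :
    ψ p * ψs q ∈ nonnegNegSpan ψ ψs :=
  Submodule.subset_span ⟨p, q, hp, hq, rfl⟩

theorem IsCAR_s4.lie_eq_zero_of_mem_nonnegNegSpan (h : IsCAR_s4 ψ ψs) {x y : A}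
    (hx : x ∈ nonnegNegSpan ψ ψs) (hy : y ∈ nonnegNegSpan ψ ψs) : ⁅x, y⁆ = 0 := by
  induction hx using Submodule.span_induction with
  | mem x hx =>
    obtain ⟨p, q, hp, hq, rfl⟩ := hx
    induction hy using Submodule.span_induction with
    | mem y hy =>
      obtain ⟨u, v, hu, hv, rfl⟩ := hy
      exact h.lie_quad_eq_zero_of_ne (by omega) (by omega)
    | zero => exact lie_zero _
    | add y z _ _ hy hz => rw [lie_add, hy, hz, add_zero]
    | smul r y _ hy => rw [lie_smul, hy, smul_zero]
  | zero => exact zero_lie _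
  | add x z _ _ hx hz => rw [add_lie, hx, hz, add_zero]
  | smul r x _ hx => rw [smul_lie, hx, smul_zero]

theorem quadSum_mem_nonnegNegSpan {ι : Type*} (s : Finset ι) (a : ι → ℚ) (i j : ι → ℤ)
    (hi : ∀ m, 0 ≤ i m) (hj : ∀ m, j m < 0) :
    ∑ m ∈ s, a m • (ψ (i m) * ψs (j m)) ∈ nonnegNegSpan ψ ψs :=
  Submodule.sum_mem _ fun m _ => Submodule.smul_mem _ _ (quad_mem_nonnegNegSpan (hi m) (hj m))

theorem lie_Lambda_quadSum {ι : Type*} (s : Finset ι) (Λ : ℤ → A)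
    (hΛ : ∀ a b k : ℤ,
      (ψ a * ψs b) * Λ k - Λ k * (ψ a * ψs b) = ψ a * ψs (b + k) - ψ (a - k) * ψs b)
    (a : ι → ℚ) (i j : ι → ℤ) (k : ℤ) :
    ⁅Λ k, ∑ m ∈ s, a m • (ψ (i m) * ψs (j m))⁆
      = ∑ m ∈ s, a m • (ψ (i m - k) * ψs (j m) - ψ (i m) * ψs (j m + k)) := by
  refine (lie_sum _ _ _).trans (sum_congr rfl fun m _ => ?_)
  rw [lie_smul, ← lie_skew, Ring.lie_def, hΛ, neg_sub]

theorem IsCAR_s4.lie_shiftSum_quadSum (h : IsCAR_s4 ψ ψs) {ι : Type*} [Fintype ι] (a : ι → ℚ)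
    (i j : ι → ℤ) (hi : ∀ m, 0 ≤ i m) (hj : ∀ m, j m < 0) (k : ℤ) :
    ⁅∑ m, a m • (ψ (i m - k) * ψs (j m) - ψ (i m) * ψs (j m + k)),
        ∑ m, a m • (ψ (i m) * ψs (j m))⁆
      = (-2 : ℚ) • ∑ p, ∑ m, (if i m = j p + k then a m * a p else 0) • (ψ (i p) * ψs (j m)) := by
  set S := ∑ p, ∑ m, (if i m = j p + k then a m * a p else 0) • (ψ (i p) * ψs (j m))
  calc _ = -∑ p, ∑ m, ((if i m = j p + k then a m * a p else 0) • (ψ (i p) * ψs (j m))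
          + (if i p = j m + k then a p * a m else 0) • (ψ (i m) * ψs (j p))) := by
        simp only [sum_lie, lie_sum, smul_lie, lie_smul,
          h.lie_shift_quad (hi _) (hj _) (hi _) (hj _), smul_sum, ← sum_neg_distrib]
        refine sum_congr rfl fun p _ => sum_congr rfl fun m _ => ?_
        split_ifs <;> simp [smul_smul, mul_comm]
    _ = -(S + S) := by
        simp only [sum_add_distrib]
        rw [sum_comm (f := fun p m =>
          (if i p = j m + k then a p * a m else 0) • (ψ (i m) * ψs (j p)))]
    _ = (-2 : ℚ) • S := by module

theorem lie_Lambda_add_smul_quadSum {ι : Type*} [Fintype ι] (Λ : ℤ → A)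
    (hΛ : ∀ a b k : ℤ,
      (ψ a * ψs b) * Λ k - Λ k * (ψ a * ψs b) = ψ a * ψs (b + k) - ψ (a - k) * ψs b)
    (a : ι → ℚ) (i j : ι → ℤ) (c : ℚ) (k : ℤ) :
    ⁅Λ k + c • Λ (-1), ∑ m, a m • (ψ (i m) * ψs (j m))⁆
      = ∑ m, a m • (ψ (i m - k) * ψs (j m) - ψ (i m) * ψs (j m + k))
        + c • ∑ m, a m • (ψ (i m + 1) * ψs (j m) - ψ (i m) * ψs (j m - 1)) := by
  simp only [add_lie, smul_lie, lie_Lambda_quadSum _ Λ hΛ, sub_neg_eq_add, ← sub_eq_add_neg]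

theorem IsCAR_s4.lie_lie_Lambda_add_smul_quadSum (h : IsCAR_s4 ψ ψs) {ι : Type*} [Fintype ι]
    (Λ : ℤ → A)
    (hΛ : ∀ a b k : ℤ,
      (ψ a * ψs b) * Λ k - Λ k * (ψ a * ψs b) = ψ a * ψs (b + k) - ψ (a - k) * ψs b)
    (a : ι → ℚ) (i j : ι → ℤ) (hi : ∀ m, 0 ≤ i m) (hj : ∀ m, j m < 0) (c : ℚ) (k : ℤ) :
    ⁅⁅Λ k + c • Λ (-1), ∑ m, a m • (ψ (i m) * ψs (j m))⁆, ∑ m, a m • (ψ (i m) * ψs (j m))⁆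
      = (-2 : ℚ) • ∑ p, ∑ m, (if i m = j p + k then a m * a p else 0) • (ψ (i p) * ψs (j m)) := by
  have hShiftMem : ∑ m, a m • (ψ (i m + 1) * ψs (j m) - ψ (i m) * ψs (j m - 1))
      ∈ nonnegNegSpan ψ ψs :=
    Submodule.sum_mem _ fun m _ => Submodule.smul_mem _ _ <| Submodule.sub_mem _
      (quad_mem_nonnegNegSpan (by linarith [hi m]) (hj m))
      (quad_mem_nonnegNegSpan (hi m) (by linarith [hj m]))
  rw [lie_Lambda_add_smul_quadSum Λ hΛ, add_lie, smul_lie,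
    h.lie_eq_zero_of_mem_nonnegNegSpan hShiftMem (quadSum_mem_nonnegNegSpan _ a i j hi hj),
    smul_zero, add_zero, h.lie_shiftSum_quadSum a i j hi hj]

theorem IsCAR_s4.lie_lie_lie_Lambda_add_smul_quadSum (h : IsCAR_s4 ψ ψs) {ι : Type*} [Fintype ι]
    (Λ : ℤ → A)
    (hΛ : ∀ a b k : ℤ,
      (ψ a * ψs b) * Λ k - Λ k * (ψ a * ψs b) = ψ a * ψs (b + k) - ψ (a - k) * ψs b)
    (a : ι → ℚ) (i j : ι → ℤ) (hi : ∀ m, 0 ≤ i m) (hj : ∀ m, j m < 0) (c : ℚ) (k : ℤ) :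
    ⁅⁅⁅Λ k + c • Λ (-1), ∑ m, a m • (ψ (i m) * ψs (j m))⁆, ∑ m, a m • (ψ (i m) * ψs (j m))⁆,
      ∑ m, a m • (ψ (i m) * ψs (j m))⁆ = 0 := by
  rw [h.lie_lie_Lambda_add_smul_quadSum Λ hΛ a i j hi hj]
  refine h.lie_eq_zero_of_mem_nonnegNegSpan ?_ (quadSum_mem_nonnegNegSpan _ a i j hi hj)
  exact Submodule.smul_mem _ _ <| Submodule.sum_mem _ fun p _ => Submodule.sum_mem _ fun m _ =>
    Submodule.smul_mem _ _ (quad_mem_nonnegNegSpan (hi p) (hj m))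

theorem IsCAR_s4.quadSum_pow_card_add_one_eq_zero (h : IsCAR_s4 ψ ψs) {ι : Type*} (s : Finset ι)
    (a : ι → ℚ) (i j : ι → ℤ) (hi : ∀ m, 0 ≤ i m) (hj : ∀ m, j m < 0) :
    (∑ m ∈ s, a m • (ψ (i m) * ψs (j m))) ^ (#s + 1) = 0 := by
  refine sum_pow_card_add_one_eq_zero s _ (fun m _ n _ => ?_) (fun m _ => ?_)
  · exact commute_iff_lie_eq.mpr <| h.lie_eq_zero_of_mem_nonnegNegSpan
      (Submodule.smul_mem _ _ (quad_mem_nonnegNegSpan (hi m) (hj m)))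
      (Submodule.smul_mem _ _ (quad_mem_nonnegNegSpan (hi n) (hj n)))
  · rw [smul_pow, sq (ψ _ * _), h.quad_mul_self_of_ne ((hj m).trans_le (hi m)).ne', smul_zero]

end Fermions

/-- For `X = Σ_{m=1}^{M} a_m ψ_{i_m} ψ*_{j_m}` with `i_m ≥ 0 > j_m`, and
`g = e^X`, `g⁻¹ = e^{−X}` (finite sums, since `X^{M+1} = 0`), conjugation gives
`g⁻¹(Λ_k + cΛ_{−1})g = Λ_k + cΛ_{−1} + Σ_m a_m(ψ_{i_m−k}ψ*_{j_m} − ψ_{i_m}ψ*_{j_m+k})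
− Σ_{n,m} δ_{i_m, j_n+k} a_m a_n ψ_{i_n}ψ*_{j_m}
+ c Σ_m a_m(ψ_{i_m+1}ψ*_{j_m} − ψ_{i_m}ψ*_{j_m−1})`.
The commutation of quadratic elements with `Λ_k = Σ_n ψ_n ψ*_{n+k}` is recorded as
a hypothesis. -/
theorem stmt4 {R : Type*} [Ring R] [Algebra ℚ R]
    (ψ ψs : ℤ → R)
    (h1 : ∀ i j : ℤ, ψ i * ψs j + ψs j * ψ i = if i = j then 1 else 0)
    (h2 : ∀ i j : ℤ, ψ i * ψ j + ψ j * ψ i = 0)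
    (h3 : ∀ i j : ℤ, ψs i * ψs j + ψs j * ψs i = 0)
    (Λ : ℤ → R)
    (hΛ : ∀ a b k : ℤ,
      (ψ a * ψs b) * Λ k - Λ k * (ψ a * ψs b) = ψ a * ψs (b + k) - ψ (a - k) * ψs b)
    (M : ℕ) (a : Fin M → ℚ) (i j : Fin M → ℤ)
    (hi : ∀ m, 0 ≤ i m) (hj : ∀ m, j m < 0) (c : ℚ)
    (X : R) (hX : X = ∑ m, a m • (ψ (i m) * ψs (j m)))
    (g gi : R)
    (hg : g = ∑ n ∈ Finset.range (M + 1), ((n.factorial : ℚ)⁻¹) • X ^ n)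
    (hgi : gi = ∑ n ∈ Finset.range (M + 1), ((-1 : ℚ) ^ n * (n.factorial : ℚ)⁻¹) • X ^ n)
    (k : ℤ) :
    gi * (Λ k + c • Λ (-1)) * g
      = Λ k + c • Λ (-1)
        + ∑ m, a m • (ψ (i m - k) * ψs (j m) - ψ (i m) * ψs (j m + k))
        - ∑ p, ∑ m, (if i m = j p + k then a m * a p else 0) • (ψ (i p) * ψs (j m))
        + c • ∑ m, a m • (ψ (i m + 1) * ψs (j m) - ψ (i m) * ψs (j m - 1)) := by
  have hCAR : IsCAR_s4 ψ ψs := ⟨h1, h2, h3⟩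
  have hXnil : X ^ (M + 1) = 0 := by
    simpa [hX] using hCAR.quadSum_pow_card_add_one_eq_zero univ a i j hi hj
  have hnegXnil : (-X) ^ (M + 1) = 0 := by rw [neg_pow, hXnil, mul_zero]
  have hgi' : gi = IsNilpotent.exp (-X) := by
    rw [hgi, IsNilpotent.exp_eq_sum hnegXnil]
    refine sum_congr rfl fun n _ => ?_
    rw [← neg_one_smul ℚ X, smul_pow, smul_smul, mul_comm]
  have hAd3 : ⁅⁅⁅Λ k + c • Λ (-1), X⁆, X⁆, X⁆ = 0 := by
    rw [hX]; exact hCAR.lie_lie_lie_Lambda_add_smul_quadSum Λ hΛ a i j hi hj c k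
  rw [hgi', hg, ← IsNilpotent.exp_eq_sum hXnil,
    IsNilpotent.exp_neg_mul_mul_exp_of_lie_lie_lie_eq_zero ⟨M + 1, hXnil⟩ hAd3, hX,
    hCAR.lie_lie_Lambda_add_smul_quadSum Λ hΛ a i j hi hj, lie_Lambda_add_smul_quadSum Λ hΛ]
  module
end

section
/- For formal distributions in the Clifford algebra A, the commutator of bilinear fermion fields satisfies [ψ(p)ψ*(q), ψ(p')ψ*(q')] = q δ(q − p') ψ(p)ψ*(q') − q' δ(q' − p) ψ(p')ψ*(q), where δ(q − p) = q^{−1} Σ_{n∈ℤ}(p/q)^n. -/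
/-! Expanding the commutator of two products through anticommutators, the terms with
`{ψ_a, ψ_c}` and `{ψ*_b, ψ*_d}` vanish and the two remaining anticommutators
`{ψ*_b, ψ_c}` and `{ψ_a, ψ*_d}` are Kronecker deltas. -/

theorem mul_mul_sub_mul_mul_eq_anticommutators {R : Type*} [Ring R] (A B C D : R) :
    A * B * (C * D) - C * D * (A * B) =
      A * (B * C + C * B) * D - A * C * (B * D + D * B)
        + (A * C + C * A) * D * B - C * (A * D + D * A) * B := by
  noncomm_ring

theorem mul_mul_sub_mul_mul_of_anticommute {R : Type*} [Ring R] {A B C D : R}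
    (hAC : A * C + C * A = 0) (hBD : B * D + D * B = 0) :
    A * B * (C * D) - C * D * (A * B) = A * (B * C + C * B) * D - C * (A * D + D * A) * B := by
  rw [mul_mul_sub_mul_mul_eq_anticommutators, hAC, hBD]
  noncomm_ring

/-- The commutator of bilinear fermion fields satisfies
`[ψ(p)ψ*(q), ψ(p')ψ*(q')] = q δ(q − p') ψ(p)ψ*(q') − q' δ(q' − p) ψ(p')ψ*(q)`,
interpreted coefficientwise in the formal variables `p, q, p', q'`:
taking the coefficient of `p^a q^{−b} p'^c q'^{−d}` (and noting that the
coefficient of `p'^c q^{−b}` in `q δ(q − p') = Σ_n p'^n q^{−n}` is `δ_{bc}`,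
and that of `p^a q'^{−d}` in `q' δ(q' − p)` is `δ_{ad}`), the identity reads
`[ψ_a ψ*_b, ψ_c ψ*_d] = δ_{bc} ψ_a ψ*_d − δ_{ad} ψ_c ψ*_b`. -/
theorem stmt6 {R : Type*} [Ring R]
    (ψ ψs : ℤ → R)
    (h1 : ∀ i j : ℤ, ψ i * ψs j + ψs j * ψ i = if i = j then 1 else 0)
    (h2 : ∀ i j : ℤ, ψ i * ψ j + ψ j * ψ i = 0)
    (h3 : ∀ i j : ℤ, ψs i * ψs j + ψs j * ψs i = 0) :
    ∀ a b c d : ℤ,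
      (ψ a * ψs b) * (ψ c * ψs d) - (ψ c * ψs d) * (ψ a * ψs b) =
        (if b = c then ψ a * ψs d else 0) - (if a = d then ψ c * ψs b else 0) := by
  intro a b c d
  have hbc : ψs b * ψ c + ψ c * ψs b = if b = c then 1 else 0 := by
    rw [add_comm, h1]
    simp only [eq_comm]
  rw [mul_mul_sub_mul_mul_of_anticommute (h2 a c) (h3 b d), hbc, h1]
  split_ifs <;> simp
end

section
/- For any two pseudo-differential operators P and Q over a differential ring, Res_λ[(P e^{xλ})(Q e^{−xλ})] = Res_∂ (P Q*), where Q* is the formal adjoint of Q, Res_∂ extracts the coefficient of ∂^{−1}, and Res_λ extracts the coefficient of λ^{−1} after applying P and Q to the exponentials formally (P e^{xλ} = Σ p_i(x) λ^i e^{xλ} etc.). -/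
/-! STATEMENT 7: For pseudo-differential operators `P, Q` over a differential ring,
`Res_λ[(P e^{xλ})(Q e^{−xλ})] = Res_∂ (P Q*)`.

A pseudo-differential operator of order `≤ b` is represented by its coefficient
function `p : ℤ → A` (with `p i = 0` for `i > b`), standing for `Σ_i p i ∂^i`.
`compCoeff` gives the coefficients of the composition, `adjCoeff` those of the
formal adjoint.  Since `P e^{xλ} = Σ_i p_i λ^i e^{xλ}` and
`Q e^{−xλ} = Σ_j q_j (−λ)^j e^{−xλ}`, the residue in `λ` of the product is
`Σ_{i+j=−1} (−1)^j p_i q_j`. -/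

open Finset

noncomputable section

/-- Generalized binomial coefficient `C(i, l)` for `i : ℤ`, `l : ℕ`. -/
def gbinom (i : ℤ) (l : ℕ) : ℚ :=
  (∏ t ∈ Finset.range l, ((i : ℚ) - t)) / (Nat.factorial l)

variable {A : Type*} [CommRing A] [Algebra ℚ A]

/-- Coefficient of `∂^k` in the composition `P ∘ Q`, where `P = Σ p_i ∂^i` has order
`≤ bp` and `Q = Σ q_j ∂^j` has order `≤ bq`, using
`∂^i ∘ f = Σ_{l≥0} C(i,l) f^{(l)} ∂^{i−l}`. -/
def compCoeff (d : A → A) (p : ℤ → A) (bp : ℤ) (q : ℤ → A) (bq : ℤ) (k : ℤ) : A :=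
  ∑ i ∈ Finset.Icc (k - bq) bp,
    ∑ l ∈ Finset.range ((i + bq - k).toNat + 1),
      gbinom i l • (p i * d^[l] (q (k - i + l)))

/-- Coefficient of `∂^k` in the formal adjoint `Q* = Σ_i (−1)^i ∂^i ∘ q_i` of an
operator of order `≤ bq`. -/
def adjCoeff (d : A → A) (q : ℤ → A) (bq : ℤ) (k : ℤ) : A :=
  ∑ i ∈ Finset.Icc k bq,
    (((-1 : ℚ) ^ i) * gbinom i (i - k).toNat) • d^[(i - k).toNat] (q i)

/-! Composing `P` with `Q* = Σ_j (-1)^j ∂^j ∘ q_j`, the pair `(p_i, q_j)` contributes to the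
coefficient of `∂^k` in `P Q*` the terms `C(i, l) C(j, n - l) p_i q_j^{(n)}`, `n = i + j - k`, which
Vandermonde's identity sums to `C(i + j, n)`. For `k = -1` this is `C(n - 1, n)`, which vanishes
unless `n = 0`, i.e. `i + j = -1`: exactly the pairs that make up the `λ`-residue. -/

lemma gbinom_eq_choose (i : ℤ) (l : ℕ) : gbinom i l = Ring.choose (i : ℚ) l := by
  rw [Ring.choose_eq_smul, ← Polynomial.aeval_eq_smeval, ← Polynomial.eval_map_algebraMap,
    descPochhammer_map, descPochhammer_eval_eq_prod_range, smul_eq_mul, gbinom, div_eq_inv_mul]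

lemma gbinom_add (i j : ℤ) (n : ℕ) :
    gbinom (i + j) n = ∑ l ∈ range (n + 1), gbinom i l * gbinom j (n - l) := by
  rw [gbinom_eq_choose, Int.cast_add, Ring.add_choose_eq n (Commute.all (i : ℚ) j),
    Nat.sum_antidiagonal_eq_sum_range_succ_mk]
  simp only [gbinom_eq_choose]

lemma gbinom_zero_right (i : ℤ) : gbinom i 0 = 1 := by
  simp [gbinom]

lemma gbinom_eq_zero_of_lt {m : ℤ} {l : ℕ} (h0 : 0 ≤ m) (h : m < l) : gbinom m l = 0 := by
  lift m to ℕ using h0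
  rw [gbinom_eq_choose, Int.cast_natCast, Ring.choose_natCast,
    Nat.choose_eq_zero_of_lt (by omega), Nat.cast_zero]

lemma iterate_adjCoeff (f : Module.End ℚ A) (q : ℤ → A) (bq k : ℤ) (l : ℕ) :
    f^[l] (adjCoeff f q bq k) = ∑ j ∈ Icc k bq,
      ((-1 : ℚ) ^ j * gbinom j (j - k).toNat) • f^[l + (j - k).toNat] (q j) := by
  simp only [adjCoeff, ← Module.End.coe_pow, map_sum, map_smul, pow_add, Module.End.mul_apply]

lemma compCoeff_adjCoeff (f : Module.End ℚ A) (p q : ℤ → A) (bp bq k : ℤ) :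
    compCoeff f p bp (adjCoeff f q bq) bq k =
      ∑ i ∈ Icc (k - bq) bp, ∑ j ∈ Icc (k - i) bq,
        ((-1 : ℚ) ^ j * gbinom (i + j) (i + j - k).toNat) • (p i * f^[(i + j - k).toNat] (q j)) := by
  refine sum_congr rfl fun i _ => ?_
  simp_rw [iterate_adjCoeff, mul_sum, smul_sum, mul_smul_comm, smul_smul]
  rw [sum_comm' (t' := Icc (k - i) bq) (s' := fun j => range ((i + j - k).toNat + 1))
    (by intro l j; simp only [mem_range, mem_Icc]; omega)]
  refine sum_congr rfl fun j _ => ?_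
  rw [gbinom_add, mul_sum, sum_smul]
  refine sum_congr rfl fun l hl => ?_
  have hl : l ≤ (i + j - k).toNat := Nat.lt_succ_iff.mp (mem_range.mp hl)
  rw [show (j - (k - i + l)).toNat = (i + j - k).toNat - l by omega, Nat.add_sub_cancel' hl,
    mul_left_comm]

lemma compCoeff_adjCoeff_neg_one (f : Module.End ℚ A) (p q : ℤ → A) (bp bq : ℤ) :
    compCoeff f p bp (adjCoeff f q bq) bq (-1) =
      ∑ i ∈ Icc (-1 - bq) bp, ((-1 : ℚ) ^ (-1 - i)) • (p i * q (-1 - i)) := by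
  rw [compCoeff_adjCoeff]
  refine sum_congr rfl fun i hi => ?_
  rw [sum_eq_single_of_mem (-1 - i) (by rw [mem_Icc] at hi ⊢; omega)]
  · simp [gbinom_zero_right]
  · intro j hj hne
    rw [gbinom_eq_zero_of_lt (by rw [mem_Icc] at hj; omega) (by omega), mul_zero, zero_smul]

theorem stmt7_general (d : Derivation ℚ A A) (p q : ℤ → A) (bp bq : ℤ) :
    (∑ i ∈ Finset.Icc (-1 - bq) bp, ((-1 : ℚ) ^ (-1 - i)) • (p i * q (-1 - i)))
      = compCoeff (fun x => d x) p bp (adjCoeff (fun x => d x) q bq) bq (-1) :=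
  (compCoeff_adjCoeff_neg_one d.toLinearMap p q bp bq).symm

theorem stmt7 (d : Derivation ℚ A A) (p q : ℤ → A) (bp bq : ℤ)
    (hp : ∀ i : ℤ, bp < i → p i = 0) (hq : ∀ i : ℤ, bq < i → q i = 0) :
    (∑ i ∈ Finset.Icc (-1 - bq) bp, ((-1 : ℚ) ^ (-1 - i)) • (p i * q (-1 - i)))
      = compCoeff (fun x => d x) p bp (adjCoeff (fun x => d x) q bq) bq (-1) :=
  stmt7_general d p q bp bq

end
end

section
/- Suppose {L_i | i ∈ ℤ} spans a Lie algebra with brackets [L_i, L_j] = (i − j) L_{i+j} (the centerless Virasoro / Witt algebra), and let c be a scalar. Define T_m := L_{m+1} − 4c L_{m−1} for m ≥ 0. Then [T_m, T_n] = (m − n)(L_{m+n+2} − 8c L_{m+n} + 16c² L_{m+n−2}) = (m−n) T_{m+n+1} − 4c(m−n) T_{m+n−1}; in particular the map ∂/∂t_m* ↦ T_m from the additional symmetry flows of the c-1 constrained KP hierarchy, with [∂/∂t_m*, ∂/∂t_n*] = (m−n) ∂/∂t_{m+n+1}* − 4c(m−n) ∂/∂t_{m+n−1}*, is a Lie algebra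 homomorphism into the Witt algebra. -/
/-!
Bilinearity expands `⁅T m, T n⁆` into four Witt brackets. The two mixed terms land on the same
generator `L (m + n)` with coefficients `m - n + 2` and `m - n - 2`, so the total is `m - n`
times a three-term combination; regrouping it by `T` gives the second form.
-/

theorem sub_smul_shift_regroup {R V : Type*} [CommRing R] [AddCommGroup V] [Module R V]
    (L : ℤ → V) (a r : R) (k : ℤ) :
    r • (L (k + 2) - (2 * a) • L k + a ^ 2 • L (k - 2))
      = r • (L (k + 1 + 1) - a • L (k + 1 - 1)) - (a * r) • (L (k - 1 + 1) - a • L (k - 1 - 1)) := by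
  rw [show k + 1 + 1 = k + 2 by ring, show k + 1 - 1 = k by ring,
    show k - 1 + 1 = k by ring, show k - 1 - 1 = k - 2 by ring]
  module

theorem witt_lie_sub_smul {R V : Type*} [CommRing R] [LieRing V] [LieAlgebra R V] {L : ℤ → V}
    (hWitt : ∀ i j : ℤ, ⁅L i, L j⁆ = ((i - j : ℤ) : R) • L (i + j))
    (a : R) (m n : ℤ) :
    ⁅L (m + 1) - a • L (m - 1), L (n + 1) - a • L (n - 1)⁆
      = ((m - n : ℤ) : R) • (L (m + n + 2) - (2 * a) • L (m + n) + a ^ 2 • L (m + n - 2)) := by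
  rw [lie_sub, sub_lie, sub_lie, lie_smul, lie_smul, smul_lie, smul_lie,
    hWitt, hWitt, hWitt, hWitt,
    show m + 1 + (n + 1) = m + n + 2 by ring, show m - 1 + (n + 1) = m + n by ring,
    show m + 1 + (n - 1) = m + n by ring, show m - 1 + (n - 1) = m + n - 2 by ring]
  push_cast
  module

/-- In the Witt (centerless Virasoro) algebra with `[L_i, L_j] = (i−j)L_{i+j}`,
let `T_m := L_{m+1} − 4c L_{m−1}` for `m ≥ 0`.  Then
`[T_m, T_n] = (m−n)(L_{m+n+2} − 8c L_{m+n} + 16c² L_{m+n−2})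
            = (m−n) T_{m+n+1} − 4c(m−n) T_{m+n−1}`;
in particular `∂/∂t_m* ↦ T_m` realizes the additional-symmetry relations
`[∂/∂t_m*, ∂/∂t_n*] = (m−n)∂/∂t_{m+n+1}* − 4c(m−n)∂/∂t_{m+n−1}*` inside the Witt
algebra, i.e. is a Lie algebra homomorphism. -/
theorem stmt9 {V : Type*} [LieRing V] [LieAlgebra ℚ V]
    (L : ℤ → V)
    (hWitt : ∀ i j : ℤ, ⁅L i, L j⁆ = ((i - j : ℤ) : ℚ) • L (i + j))
    (c : ℚ)
    (T : ℤ → V) (hT : ∀ m : ℤ, T m = L (m + 1) - (4 * c) • L (m - 1)) :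
    ∀ m n : ℤ, 0 ≤ m → 0 ≤ n →
      (⁅T m, T n⁆
          = ((m - n : ℤ) : ℚ) •
              (L (m + n + 2) - (8 * c) • L (m + n) + (16 * c ^ 2) • L (m + n - 2)))
      ∧ (⁅T m, T n⁆
          = ((m - n : ℤ) : ℚ) • T (m + n + 1)
              - (4 * c * ((m - n : ℤ) : ℚ)) • T (m + n - 1)) := by
  intro m n _ _
  have hexpand : ⁅T m, T n⁆
      = ((m - n : ℤ) : ℚ) •
          (L (m + n + 2) - (8 * c) • L (m + n) + (16 * c ^ 2) • L (m + n - 2)) := by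
    rw [hT, hT, witt_lie_sub_smul hWitt]
    ring_nf
  refine ⟨hexpand, ?_⟩
  rw [hexpand, hT, hT, ← sub_smul_shift_regroup L]
  ring_nf
end

section
/- Suppose {L̃_{2i} | i ∈ ℤ} satisfies [L̃_{2i}, L̃_{2j}] = 2(i − j) L̃_{2i+2j}. Define S_k := 2L̃_{2k+2} − 8c L̃_{2k} for k ≥ 0. Then [S_k, S_n] = −2(2n − 2k) S_{n+k+1} + 8c(2n − 2k) S_{n+k}; in particular the even-index elements {L̃_{2i}} form a Lie subalgebra of the Witt algebra (under L̃_{2i} = L_{2i}) and the BKP additional flow relations [∂/∂t*_{2k+1}, ∂/∂t*_{2n+1}] = −2(2n−2k) ∂/∂t*_{2n+2k+3} + 8c(2n−2k) ∂/∂t*_{2n+2k+1} are realized by k ↦ S_k. -/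
/-! A family `E : ℤ → V` with `⁅E i, E j⁆ = m (i - j) E (i + j)` is closed under reindexing
`i ↦ d i` (the scale becomes `d m`). For `S k = a E (k + 1) + b E k` the four terms of `⁅S k, S n⁆`
all carry the factor `m (k - n)`, and what remains is `a² E (n+k+2) + 2ab E (n+k+1) + b² E (n+k)`,
which is `a S (n + k + 1) + b S (n + k)`. With `E = L̃`, `m = 2`, `a = 2`, `b = -8c` this is the
stated relation. -/

def SatisfiesWittBracket {R V : Type*} [CommRing R] [LieRing V] [LieAlgebra R V]
    (m : R) (E : ℤ → V) : Prop :=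
  ∀ i j : ℤ, ⁅E i, E j⁆ = (m * ((i - j : ℤ) : R)) • E (i + j)

namespace SatisfiesWittBracket

variable {R V : Type*} [CommRing R] [LieRing V] [LieAlgebra R V] {m : R} {E : ℤ → V}

theorem comp_mul (h : SatisfiesWittBracket m E) (d : ℤ) :
    SatisfiesWittBracket (d * m) (fun i => E (d * i)) := by
  intro i j
  rw [h, ← mul_add]
  congr 1
  push_cast
  ring

theorem lie_add_smul_shift (h : SatisfiesWittBracket m E) (a b : R) (k n : ℤ) :
    ⁅a • E (k + 1) + b • E k, a • E (n + 1) + b • E n⁆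
      = (m * ((k - n : ℤ) : R)) •
          (a • (a • E (n + k + 1 + 1) + b • E (n + k + 1)) + b • (a • E (n + k + 1) + b • E (n + k))) := by
  simp only [lie_add, add_lie, lie_smul, smul_lie, h _ _]
  rw [show k + 1 + (n + 1) = n + k + 1 + 1 by ring, show k + 1 + n = n + k + 1 by ring,
    show k + (n + 1) = n + k + 1 by ring, add_comm k n]
  push_cast
  module

end SatisfiesWittBracket

/-- In the Witt algebra with `[L_i, L_j] = (i−j)L_{i+j}`, the even-indexed
elements `L̃_{2i} := L_{2i}` form a Lie subalgebra: `[L̃_{2i}, L̃_{2j}] = 2(i−j)L̃_{2(i+j)}`;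
and the elements `S_k := 2L̃_{2k+2} − 8c L̃_{2k}` (k ≥ 0) satisfy
`[S_k, S_n] = −2(2n − 2k) S_{n+k+1} + 8c(2n − 2k) S_{n+k}`, so `k ↦ S_k` realizes the
BKP additional-flow relations inside the Witt algebra. -/
theorem stmt10 {V : Type*} [LieRing V] [LieAlgebra ℚ V]
    (L : ℤ → V)
    (hWitt : ∀ i j : ℤ, ⁅L i, L j⁆ = ((i - j : ℤ) : ℚ) • L (i + j))
    (c : ℚ)
    (L2 : ℤ → V) (hL2 : ∀ i : ℤ, L2 i = L (2 * i))
    (S : ℤ → V) (hS : ∀ k : ℤ, S k = (2 : ℚ) • L2 (k + 1) - (8 * c) • L2 k) :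
    (∀ i j : ℤ, ⁅L2 i, L2 j⁆ = ((2 * (i - j) : ℤ) : ℚ) • L2 (i + j))
    ∧ (∀ k n : ℤ, 0 ≤ k → 0 ≤ n →
        ⁅S k, S n⁆
          = (-(2 * ((2 * n - 2 * k : ℤ) : ℚ))) • S (n + k + 1)
              + (8 * c * ((2 * n - 2 * k : ℤ) : ℚ)) • S (n + k)) := by
  have hL : SatisfiesWittBracket (1 : ℚ) L := fun i j => by rw [hWitt, one_mul]
  have hEven : SatisfiesWittBracket ((2 : ℤ) * (1 : ℚ)) L2 := by
    rw [show L2 = fun i => L (2 * i) from funext hL2]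
    exact hL.comp_mul 2
  have hS_add : ∀ k, S k = (2 : ℚ) • L2 (k + 1) + (-(8 * c)) • L2 k := fun k => by
    rw [hS, neg_smul, sub_eq_add_neg]
  refine ⟨fun i j => by rw [hEven]; push_cast; ring_nf, fun k n _ _ => ?_⟩
  rw [hS_add k, hS_add n, hEven.lie_add_smul_shift, ← hS_add, ← hS_add]
  push_cast
  module
end

section
/- In the fermionic Fock space F, suppose |u⟩ = |0⟩ and |f⟩ ∈ F satisfies Σ_{m∈ℤ} ψ_m|0⟩ ⊗ ψ_m*|f⟩ = |f⟩ ⊗ |0⟩ in F ⊗ F. Then there exists an element α = Σ_{m≥0} c_m ψ_m in the span V of the ψ_m such that |f⟩ = α|0⟩. Conversely, if |f⟩ = α|0⟩ for some α = Σ_{m≥0} c_m ψ_m, then Σ_{m∈ℤ} ψ_m|0⟩ ⊗ ψ_m*|f⟩ = |f⟩ ⊗ |0⟩. -/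
open scoped TensorProduct

/-!
Contracting the second tensor factor with a functional `g` such that `g |0⟩ = 1` turns
`Σ ψ_m|0⟩ ⊗ ψ*_m|f⟩ = |f⟩ ⊗ |0⟩` into `|f⟩ = Σ g(ψ*_m|f⟩) ψ_m|0⟩`.
Conversely, the anticommutator `{ψ_m, ψ*_k} = δ_{mk}` and `ψ*_k|0⟩ = 0` give
`ψ*_k α|0⟩ = c_k|0⟩` for `α = Σ c_m ψ_m`, and the tensor sum collapses to
`(Σ c_m ψ_m|0⟩) ⊗ |0⟩`.
-/

section FockSpace

variable {K F : Type*} [Field K] [AddCommGroup F] [Module K F]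

theorem mem_span_range_of_sum_tmul_eq_tmul {ι : Type*} {e w : ι → F} {s : Finset ι} {f v : F}
    (hv : v ≠ 0) (h : ∑ i ∈ s, e i ⊗ₜ[K] w i = f ⊗ₜ[K] v) :
    f ∈ Submodule.span K (Set.range e) := by
  obtain ⟨g, hg⟩ := Module.Projective.exists_dual_eq_one K hv
  have hf : ∑ i ∈ s, g (w i) • e i = f := by
    simpa [hg] using congrArg ((TensorProduct.rid K F).toLinearMap ∘ₗ g.lTensor F) h
  exact hf ▸ Submodule.sum_mem _ fun i _ =>
    Submodule.smul_mem _ _ (Submodule.subset_span ⟨i, rfl⟩)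

variable {ψ ψs : ℤ → F →ₗ[K] F} {v : F}

theorem psiStar_psi_vacuum
    (h1 : ∀ (i j : ℤ) (x : F), ψ i (ψs j x) + ψs j (ψ i x) = if i = j then x else 0)
    (hv2 : ∀ m : ℤ, 0 ≤ m → ψs m v = 0) (i : ℤ) {j : ℤ} (hj : 0 ≤ j) :
    ψs j (ψ i v) = if i = j then v else 0 := by
  simpa [hv2 j hj] using h1 i j v

theorem psiStar_finsuppSum_psi_vacuum
    (h1 : ∀ (i j : ℤ) (x : F), ψ i (ψs j x) + ψs j (ψ i x) = if i = j then x else 0)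
    (hv2 : ∀ m : ℤ, 0 ≤ m → ψs m v = 0) (c : ℕ →₀ K) (k : ℕ) :
    ψs k (c.sum fun m cm => cm • ψ m v) = c k • v := by
  simp +contextual [map_finsuppSum, psiStar_psi_vacuum h1 hv2 _ (Int.natCast_nonneg k), smul_ite]

end FockSpace

theorem stmt15_general {F : Type*} [AddCommGroup F] [Module ℂ F]
    (ψ ψs : ℤ → (F →ₗ[ℂ] F))
    (h1 : ∀ (i j : ℤ) (x : F),
      ψ i (ψs j x) + ψs j (ψ i x) = if i = j then x else 0)
    (v : F)
    (hv2 : ∀ m : ℤ, 0 ≤ m → ψs m v = 0)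
    (hindep : LinearIndependent ℂ fun m : ℕ => ψ (m : ℤ) v)
    (f : F) (M : ℕ) (hM : ∀ m : ℤ, (M : ℤ) ≤ m → ψs m f = 0) :
    (∑ m ∈ Finset.range M, (ψ (m : ℤ) v) ⊗ₜ[ℂ] (ψs (m : ℤ) f)) = f ⊗ₜ[ℂ] v
      ↔ ∃ c : ℕ →₀ ℂ, f = c.sum fun m cm => cm • ψ (m : ℤ) v := by
  have hv : v ≠ 0 := fun h => hindep.ne_zero 0 (by simp [h])
  constructor
  · intro h
    obtain ⟨c, hc⟩ := Finsupp.mem_span_range_iff_exists_finsupp.mp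
      (mem_span_range_of_sum_tmul_eq_tmul hv h)
    exact ⟨c, hc.symm⟩
  · rintro ⟨c, hc⟩
    have hψs (m : ℕ) : ψs m f = c m • v := hc ▸ psiStar_finsuppSum_psi_vacuum h1 hv2 c m
    have hsupp : c.support ⊆ Finset.range M := by
      intro m hm
      by_contra hmM
      have hcm : c m • v = 0 := hψs m ▸ hM m (by simpa using hmM)
      exact Finsupp.mem_support_iff.mp hm ((smul_eq_zero.mp hcm).resolve_right hv)
    calc ∑ m ∈ Finset.range M, ψ m v ⊗ₜ[ℂ] ψs m f
        = ∑ m ∈ Finset.range M, (c m • ψ m v) ⊗ₜ[ℂ] v := by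
          simp only [hψs, TensorProduct.tmul_smul, TensorProduct.smul_tmul']
      _ = f ⊗ₜ[ℂ] v := by
          rw [← TensorProduct.sum_tmul, hc, Finsupp.sum_of_support_subset c hsupp
            (fun m cm => cm • ψ m v) fun _ _ => zero_smul ℂ _]

/-- In the fermionic Fock space `F` with vacuum `v = |0⟩`
(`ψ_m v = 0` for `m < 0`, `ψ*_m v = 0` for `m ≥ 0`, and the `ψ_m v`, `m ≥ 0`,
linearly independent), let `f ∈ F` with `ψ*_m f = 0` for all `m ≥ M`.  Then
`Σ_{m∈ℤ} ψ_m|0⟩ ⊗ ψ*_m|f⟩ = |f⟩ ⊗ |0⟩` (the sum reducing to `0 ≤ m < M`) holds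
if and only if `f = α|0⟩` for some `α = Σ_{m≥0} c_m ψ_m` with finitely many `c_m ≠ 0`. -/
theorem stmt15 {F : Type*} [AddCommGroup F] [Module ℂ F]
    (ψ ψs : ℤ → (F →ₗ[ℂ] F))
    (h1 : ∀ (i j : ℤ) (x : F),
      ψ i (ψs j x) + ψs j (ψ i x) = if i = j then x else 0)
    (h2 : ∀ (i j : ℤ) (x : F), ψ i (ψ j x) + ψ j (ψ i x) = 0)
    (h3 : ∀ (i j : ℤ) (x : F), ψs i (ψs j x) + ψs j (ψs i x) = 0)
    (v : F)
    (hv1 : ∀ m : ℤ, m < 0 → ψ m v = 0)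
    (hv2 : ∀ m : ℤ, 0 ≤ m → ψs m v = 0)
    (hindep : LinearIndependent ℂ fun m : ℕ => ψ (m : ℤ) v)
    (f : F) (M : ℕ) (hM : ∀ m : ℤ, (M : ℤ) ≤ m → ψs m f = 0) :
    (∑ m ∈ Finset.range M, (ψ (m : ℤ) v) ⊗ₜ[ℂ] (ψs (m : ℤ) f)) = f ⊗ₜ[ℂ] v
      ↔ ∃ c : ℕ →₀ ℂ, f = c.sum fun m cm => cm • ψ (m : ℤ) v :=
  stmt15_general ψ ψs h1 v hv2 hindep f M hM
end
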